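/- arXiv:1008.0156 — 3 statements merged into one kernel-verified Lean document; each statement's English description precedes it below -/
import Mathlib

section
/- Let (E, τ, 𝓑, 𝓜) be a generic matroid. Then any two elements B, B' of 𝓑 have the same (finite) cardinality. -/
/-- `Bs` is the collection of bases of a matroid (with finite bases):
nonempty, an antichain, and satisfying the basis exchange property. -/
def IsMatroidBases {E : Type*} [DecidableEq E] (Bs : Set (Finset E)) : Prop :=
  Bs.Nonempty ∧
  (∀ B ∈ Bs, ∀ B' ∈ Bs, ¬ B ⊂ B') ∧
  (∀ B₁ ∈ Bs, ∀ B₂ ∈ Bs, ∀ a ∈ B₁, a ∉ B₂ →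
    ∃ b ∈ B₂, b ∉ B₁ ∧ insert b (B₁.erase a) ∈ Bs)

/-- The bases of the generic matroid contained in a given set `M`. -/
def basesIn {E : Type*} (𝓑 : Set (Finset E)) (M : Set E) : Set (Finset E) :=
  {B ∈ 𝓑 | (B : Set E) ⊆ M}

/-- `C_M`: the union of all bases contained in `M`. -/
def basesUnion {E : Type*} (𝓑 : Set (Finset E)) (M : Set E) : Set E :=
  ⋃ B ∈ basesIn 𝓑 M, (B : Set E)

/-- A generic matroid: a set `E` with a topology `τ`, a collection `𝓑` of
finite subsets, and a nonempty collection `𝓜` of subsets such that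
(1) for each `M ∈ 𝓜` the bases contained in `M` form a matroid on `M`;
(2) every basis is contained in some `M ∈ 𝓜`;
(3) the generic exchange property holds. -/
def IsGenericMatroid (E : Type*) [DecidableEq E] (τ : TopologicalSpace E)
    (𝓑 : Set (Finset E)) (𝓜 : Set (Set E)) : Prop :=
  𝓜.Nonempty ∧
  (∀ M ∈ 𝓜, IsMatroidBases (basesIn 𝓑 M)) ∧
  (∀ B ∈ 𝓑, ∃ M ∈ 𝓜, (B : Set E) ⊆ M) ∧
  (∀ B ∈ 𝓑, ∀ b ∈ B, ∀ M ∈ 𝓜, ∃ U : Set E, τ.IsOpen U ∧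
    (U ∩ basesUnion 𝓑 M).Nonempty ∧
    ∀ x ∈ M, (x ∈ U ∩ basesUnion 𝓑 M ↔ insert x (B.erase b) ∈ 𝓑))


theorem matroidBases_equicard {E : Type*} [DecidableEq E] {Bs : Set (Finset E)}
    (h : IsMatroidBases Bs) : ∀ B₁ ∈ Bs, ∀ B₂ ∈ Bs, B₁.card = B₂.card := by
  obtain ⟨-, hanti, hex⟩ := h
  intro B₁ h₁ B₂ h₂
  suffices H : ∀ n, ∀ B ∈ Bs, (B \ B₂).card = n → B.card = B₂.card from
    H _ B₁ h₁ rfl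
  intro n
  induction n with
  | zero =>
    intro B hB hcard
    have hsub : B ⊆ B₂ := by
      intro x hx
      by_contra hx2
      have : x ∈ B \ B₂ := Finset.mem_sdiff.mpr ⟨hx, hx2⟩
      simp [Finset.card_eq_zero.mp hcard] at this
    have : B = B₂ := by
      rcases eq_or_ne B B₂ with he | hne
      · exact he
      · exact absurd (Finset.ssubset_iff_subset_ne.mpr ⟨hsub, hne⟩) (hanti B hB B₂ h₂)
    simp [this]
  | succ n ih =>
    intro B hB hcard
    have hne : (B \ B₂).Nonempty := by
      rw [← Finset.card_pos, hcard]; omega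
    obtain ⟨a, ha⟩ := hne
    rw [Finset.mem_sdiff] at ha
    obtain ⟨b, hbB₂, hbB, hBs⟩ := hex B hB B₂ h₂ a ha.1 ha.2
    have hcard' : (insert b (B.erase a)).card = B.card := by
      rw [Finset.card_insert_of_notMem (fun hc => hbB (Finset.mem_of_mem_erase hc)),
        Finset.card_erase_of_mem ha.1]
      have : 0 < B.card := Finset.card_pos.mpr ⟨a, ha.1⟩
      omega
    have hsd : (insert b (B.erase a)) \ B₂ = (B \ B₂).erase a := by
      ext x
      simp only [Finset.mem_sdiff, Finset.mem_insert, Finset.mem_erase]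
      constructor
      · rintro ⟨hx1 | ⟨hx1, hx2⟩, hx3⟩
        · exact absurd (hx1 ▸ hbB₂) hx3
        · exact ⟨hx1, hx2, hx3⟩
      · rintro ⟨hx1, hx2, hx3⟩
        exact ⟨Or.inr ⟨hx1, hx2⟩, hx3⟩
    have := ih (insert b (B.erase a)) hBs (by
      rw [hsd, Finset.card_erase_of_mem (Finset.mem_sdiff.mpr ha), hcard]; omega)
    omega

/-- Any two bases of a generic matroid have the same cardinality. -/
theorem genericMatroid_bases_equicardinal (E : Type*) [DecidableEq E]
    (τ : TopologicalSpace E) (𝓑 : Set (Finset E)) (𝓜 : Set (Set E))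
    (h : IsGenericMatroid E τ 𝓑 𝓜) :
    ∀ B ∈ 𝓑, ∀ B' ∈ 𝓑, B.card = B'.card := by
  classical
  obtain ⟨-, hmat, hcov, hgex⟩ := h
  -- key: no basis is a proper subset of another basis
  have hanti : ∀ B ∈ 𝓑, ∀ B' ∈ 𝓑, ¬ B' ⊂ B := by
    intro B hB B' hB' hss
    obtain ⟨M, hM, hBM⟩ := hcov B hB
    have hB'M : (B' : Set E) ⊆ M := fun x hx => hBM (hss.subset hx)
    exact (hmat M hM).2.1 B' ⟨hB', hB'M⟩ B ⟨hB, hBM⟩ hss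
  intro B hB B' hB'
  obtain ⟨M, hM, hB'M⟩ := hcov B' hB'
  have hB'in : B' ∈ basesIn 𝓑 M := ⟨hB', hB'M⟩
  have hCM : basesUnion 𝓑 M ⊆ M := by
    intro x hx
    simp only [basesUnion, Set.mem_iUnion] at hx
    obtain ⟨C, hC, hxC⟩ := hx
    exact hC.2 hxC
  suffices H : ∀ n, ∀ B ∈ 𝓑, (B.filter (fun x => x ∉ M)).card = n → B.card = B'.card from
    H _ B hB rfl
  intro n
  induction n with
  | zero =>
    intro B hB hcard
    have hsub : (B : Set E) ⊆ M := by
      intro x hx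
      by_contra hx2
      have : x ∈ B.filter (fun x => x ∉ M) := Finset.mem_filter.mpr ⟨hx, hx2⟩
      simp [Finset.card_eq_zero.mp hcard] at this
    exact matroidBases_equicard (hmat M hM) B ⟨hB, hsub⟩ B' hB'in
  | succ n ih =>
    intro B hB hcard
    have hne : (B.filter (fun x => x ∉ M)).Nonempty := by
      rw [← Finset.card_pos, hcard]; omega
    obtain ⟨b, hb⟩ := hne
    rw [Finset.mem_filter] at hb
    obtain ⟨U, -, ⟨x, hxU⟩, hiff⟩ := hgex B hB b hb.1 M hM
    have hxM : x ∈ M := hCM hxU.2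
    have hBx : insert x (B.erase b) ∈ 𝓑 := (hiff x hxM).mp hxU
    have hxnB : x ∉ B.erase b := by
      intro hc
      have heq : insert x (B.erase b) = B.erase b := Finset.insert_eq_self.mpr hc
      rw [heq] at hBx
      exact hanti B hB (B.erase b) hBx (Finset.erase_ssubset hb.1)
    have hcard' : (insert x (B.erase b)).card = B.card := by
      rw [Finset.card_insert_of_notMem hxnB, Finset.card_erase_of_mem hb.1]
      have : 0 < B.card := Finset.card_pos.mpr ⟨b, hb.1⟩
      omega
    have hfil : (insert x (B.erase b)).filter (fun y => y ∉ M)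
        = (B.filter (fun y => y ∉ M)).erase b := by
      ext y
      simp only [Finset.mem_filter, Finset.mem_insert, Finset.mem_erase]
      constructor
      · rintro ⟨hy1 | ⟨hy1, hy2⟩, hy3⟩
        · exact absurd (hy1 ▸ hxM) hy3
        · exact ⟨hy1, hy2, hy3⟩
      · rintro ⟨hy1, hy2, hy3⟩
        exact ⟨Or.inr ⟨hy1, hy2⟩, hy3⟩
    have := ih (insert x (B.erase b)) hBx (by
      rw [hfil, Finset.card_erase_of_mem (Finset.mem_filter.mpr hb), hcard]; omega)
    omega
end

section
/- Let (E, τ, 𝓑, 𝓜) be a generic matroid, let B = {a₁,...,aₙ} ∈ 𝓑, and let M ∈ 𝓜. Then there exist x₁, ..., xₙ ∈ M such that for each 0 ≤ j ≤ n the set {x₁,...,x_j, a_{j+1},...,aₙ} is in 𝓑; in particular {x₁,...,xₙ} ∈ 𝓑_M, so one can pass from B to a basis of M in at most n exchange steps. -/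
/-!
Replace `a₁, …, aₙ` one at a time. At step `j` the current basis `S` contains `aⱼ`, and the
generic exchange property for `S`, `aⱼ` and `M` supplies an open `U` meeting `C_M ⊆ M`; any
`xⱼ ∈ U ∩ C_M` then makes `(S \ {aⱼ}) ∪ {xⱼ}` a basis. If `aⱼ` already occurs among
`x₁, …, xⱼ₋₁`, it lies in `M` and we simply take `xⱼ = aⱼ`.
-/

theorem Finset.image_update_eq_insert_erase {ι α : Type*} [Fintype ι] [DecidableEq ι]
    [DecidableEq α] (f : ι → α) (p : ι) (c : α) (hp : ∀ i ≠ p, f i ≠ f p) :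
    univ.image (Function.update f p c) = insert c ((univ.image f).erase (f p)) := by
  ext e
  simp only [mem_image, mem_univ, true_and, mem_insert, mem_erase]
  constructor
  · rintro ⟨i, rfl⟩
    rcases eq_or_ne i p with rfl | hip
    · simp
    · simp only [Function.update_of_ne hip]
      exact Or.inr ⟨hp i hip, i, rfl⟩
  · rintro (rfl | ⟨hne, i, rfl⟩)
    · exact ⟨p, by simp⟩
    · have hip : i ≠ p := by rintro rfl; exact hne rfl
      exact ⟨i, Function.update_of_ne hip _ _⟩

namespace Fin

variable {α : Type*} {n : ℕ}

def prefixReplace (x a : Fin n → α) (j : ℕ) : Fin n → α :=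
  fun i => if (i : ℕ) < j then x i else a i

@[simp]
theorem prefixReplace_zero (x a : Fin n → α) : prefixReplace x a 0 = a := by
  funext i
  simp [prefixReplace]

theorem prefixReplace_update_of_le (x a : Fin n → α) (p : Fin n) (c : α)
    {k : ℕ} (hk : k ≤ p) :
    prefixReplace (Function.update x p c) a k = prefixReplace x a k := by
  funext i
  by_cases hik : (i : ℕ) < k
  · have hip : i ≠ p := by rintro rfl; omega
    simp [prefixReplace, hik, Function.update_of_ne hip]
  · simp [prefixReplace, hik]

theorem prefixReplace_update_succ (x a : Fin n → α) (p : Fin n) (c : α) :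
    prefixReplace (Function.update x p c) a (p + 1) =
      Function.update (prefixReplace x a p) p c := by
  funext i
  rcases eq_or_ne i p with rfl | hip
  · simp [prefixReplace]
  · have : (i : ℕ) ≠ p := Fin.val_ne_of_ne hip
    simp only [prefixReplace, Function.update_of_ne hip]
    split_ifs <;> first | rfl | omega

end Fin

theorem basesUnion_subset {E : Type*} (𝓑 : Set (Finset E)) (M : Set E) :
    basesUnion 𝓑 M ⊆ M :=
  Set.iUnion₂_subset fun _ hB => hB.2

namespace IsGenericMatroid

variable {E : Type*} [DecidableEq E] {τ : TopologicalSpace E} {𝓑 : Set (Finset E)}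
  {𝓜 : Set (Set E)} {M : Set E}

theorem exists_insert_erase_mem (h : IsGenericMatroid E τ 𝓑 𝓜) {B : Finset E} (hB : B ∈ 𝓑)
    {b : E} (hb : b ∈ B) (hM : M ∈ 𝓜) : ∃ c ∈ M, insert c (B.erase b) ∈ 𝓑 := by
  obtain ⟨U, -, ⟨c, hcU, hcC⟩, hiff⟩ := h.2.2.2 B hB b hb M hM
  have hcM : c ∈ M := basesUnion_subset 𝓑 M hcC
  exact ⟨c, hcM, (hiff c hcM).1 ⟨hcU, hcC⟩⟩

theorem exists_mem_image_update_mem {ι : Type*} [Fintype ι] [DecidableEq ι]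
    (h : IsGenericMatroid E τ 𝓑 𝓜) (hM : M ∈ 𝓜) {f : ι → E}
    (hf : Finset.univ.image f ∈ 𝓑) (p : ι) (hp : (∃ i ≠ p, f i = f p) → f p ∈ M) :
    ∃ c ∈ M, Finset.univ.image (Function.update f p c) ∈ 𝓑 := by
  by_cases hrep : ∃ i ≠ p, f i = f p
  · exact ⟨f p, hp hrep, by simpa using hf⟩
  · push Not at hrep
    obtain ⟨c, hcM, hc⟩ := h.exists_insert_erase_mem hf (Finset.mem_image_of_mem f
      (Finset.mem_univ p)) hM
    exact ⟨c, hcM, Finset.image_update_eq_insert_erase f p c hrep ▸ hc⟩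

theorem exists_prefixReplace_mem (h : IsGenericMatroid E τ 𝓑 𝓜) (hM : M ∈ 𝓜) {n : ℕ}
    {a : Fin n → E} (hinj : Function.Injective a) (ha : Finset.univ.image a ∈ 𝓑) :
    ∀ j ≤ n, ∃ x : Fin n → E, (∀ i : Fin n, (i : ℕ) < j → x i ∈ M) ∧
      ∀ k ≤ j, Finset.univ.image (Fin.prefixReplace x a k) ∈ 𝓑 := by
  intro j
  induction j with
  | zero => exact fun _ => ⟨a, by simp, by simpa using ha⟩
  | succ j ih =>
    intro hj
    obtain ⟨x, hxM, hx⟩ := ih (by omega)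
    let p : Fin n := ⟨j, hj⟩
    -- a repeated `a p` must be one of the `x i`, since the `a i` are distinct
    have hp : (∃ i ≠ p, Fin.prefixReplace x a j i = Fin.prefixReplace x a j p) →
        Fin.prefixReplace x a j p ∈ M := by
      rintro ⟨i, hip, hi⟩
      by_cases hij : (i : ℕ) < j
      · simp only [Fin.prefixReplace, hij, p, lt_irrefl, if_true, if_false] at hi ⊢
        exact hi ▸ hxM i hij
      · simp only [Fin.prefixReplace, hij, p, lt_irrefl, if_false] at hi
        exact absurd (hinj hi) hip
    obtain ⟨c, hcM, hc⟩ := h.exists_mem_image_update_mem hM (hx j le_rfl) p hp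
    refine ⟨Function.update x p c, fun i hi => ?_, fun k hk => ?_⟩
    · rcases eq_or_ne i p with rfl | hip
      · simpa using hcM
      · rw [Function.update_of_ne hip]
        exact hxM i (lt_of_le_of_ne (Nat.lt_succ_iff.mp hi) (Fin.val_ne_of_ne hip))
    · rcases Nat.lt_or_ge k (j + 1) with hkj | hkj
      · rw [Fin.prefixReplace_update_of_le x a p c (Nat.lt_succ_iff.mp hkj)]
        exact hx k (by omega)
      · obtain rfl : k = j + 1 := by omega
        exact Fin.prefixReplace_update_succ x a p c ▸ hc

end IsGenericMatroid

/-- From any basis `B = {a₁, …, aₙ}` of a generic matroid one can pass to a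
basis of any `M ∈ 𝓜` in at most `n` exchange steps. -/
theorem genericMatroid_stepwise_exchange (E : Type*) [DecidableEq E]
    (τ : TopologicalSpace E) (𝓑 : Set (Finset E)) (𝓜 : Set (Set E))
    (h : IsGenericMatroid E τ 𝓑 𝓜) (n : ℕ) (a : Fin n → E)
    (hinj : Function.Injective a) (B : Finset E)
    (hBa : B = Finset.image a Finset.univ) (hB : B ∈ 𝓑)
    (M : Set E) (hM : M ∈ 𝓜) :
    ∃ x : Fin n → E, (∀ j, x j ∈ M) ∧
      ∀ j : ℕ, j ≤ n →
        Finset.image (fun i : Fin n => if (i : ℕ) < j then x i else a i)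
          Finset.univ ∈ 𝓑 := by
  obtain ⟨x, hxM, hx⟩ := h.exists_prefixReplace_mem hM hinj (hBa ▸ hB) n le_rfl
  exact ⟨x, fun i => hxM i i.isLt, hx⟩
end

section
/- Let k be a field, R a positively graded finitely generated k-algebra of dimension n, and x₁,...,xₙ homogeneous elements such that R is a finite module over k[x₁,...,xₙ]. Then x₁,...,xₙ are algebraically independent over k. -/
/-!
By incomparability for the integral extension `A = k[x₁, …, xₙ] ⊆ R`, a strict chain of
primes of `R` contracts to a strict chain in `A`, whence `dim A ≥ dim R = n`. But `A` is a
quotient of the polynomial ring `k[X₁, …, Xₙ]` of dimension `n`, and a nonzero relation among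
the `xᵢ` is a nonzerodivisor in the kernel, which would force `dim A + 1 ≤ n`.
-/

open Algebra

theorem ringKrullDim_le_of_isIntegral (A B : Type*) [CommRing A] [CommRing B] [Algebra A B]
    [Algebra.IsIntegral A B] : ringKrullDim B ≤ ringKrullDim A :=
  Order.krullDim_le_of_strictMono (PrimeSpectrum.comap (algebraMap A B))
    fun _ _ h ↦ Ideal.IsIntegral.comap_lt_comap (R := A) h

section

variable {k R : Type*} [Field k] [CommRing R] [Algebra k R] {ι : Type*} [Finite ι]

theorem ringKrullDim_adjoin_add_one_le_of_not_algebraicIndependent {x : ι → R}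
    (hx : ¬AlgebraicIndependent k x) :
    ringKrullDim (adjoin k (Set.range x)) + 1 ≤ Nat.card ι := by
  obtain ⟨p, hp, hp0⟩ : ∃ p, MvPolynomial.aeval x p = 0 ∧ p ≠ 0 := by
    rw [algebraicIndependent_iff_injective_aeval, injective_iff_map_eq_zero] at hx
    push Not at hx
    exact hx
  rw [ringKrullDim_eq_of_ringEquiv
    (Subalgebra.equivOfEq _ _ (adjoin_range_eq_range_aeval k x)).toRingEquiv]
  calc ringKrullDim (MvPolynomial.aeval (R := k) x).range + 1
      ≤ ringKrullDim (MvPolynomial ι k) :=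
        ringKrullDim_succ_le_of_surjective (MvPolynomial.aeval x).rangeRestrict.toRingHom
          (AlgHom.rangeRestrict_surjective _) (mem_nonZeroDivisors_of_ne_zero hp0)
          (Subtype.ext hp)
    _ = Nat.card ι := by
      rw [MvPolynomial.ringKrullDim_of_isNoetherianRing, ringKrullDim_eq_zero_of_field, zero_add]

theorem algebraicIndependent_of_isIntegral_of_ringKrullDim_eq (x : ι → R)
    [Algebra.IsIntegral (adjoin k (Set.range x)) R] (hdim : ringKrullDim R = Nat.card ι) :
    AlgebraicIndependent k x := by
  by_contra hx
  have hle := ringKrullDim_le_of_isIntegral (adjoin k (Set.range x)) R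
  rw [hdim] at hle
  have : (Nat.card ι : WithBot ℕ∞) + 1 ≤ Nat.card ι :=
    le_trans (by gcongr) (ringKrullDim_adjoin_add_one_le_of_not_algebraicIndependent hx)
  norm_cast at this
  omega

end

theorem hsop_algebraicIndependent_general (k R : Type*) [Field k] [CommRing R]
    [Algebra k R]
    (n : ℕ) (hdim : ringKrullDim R = n)
    (x : Fin n → R)
    (hfin : Module.Finite (Algebra.adjoin k (Set.range x)) R) :
    AlgebraicIndependent k x := by
  have := Algebra.IsIntegral.of_finite (Algebra.adjoin k (Set.range x)) R
  exact algebraicIndependent_of_isIntegral_of_ringKrullDim_eq x (by simpa using hdim)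

/-- If `R` is a positively graded affine `k`-algebra of dimension `n` with
`R₀ = k`, and `R` is a finite module over `k[x₁, …, xₙ]` for homogeneous
elements `x₁, …, xₙ`, then the `xᵢ` are algebraically independent over `k`. -/
theorem hsop_algebraicIndependent (k R : Type*) [Field k] [CommRing R]
    [Algebra k R] (𝒜 : ℕ → Submodule k R) [GradedAlgebra 𝒜]
    (hfg : Algebra.FiniteType k R) (h0 : 𝒜 0 = 1)
    (n : ℕ) (hdim : ringKrullDim R = n)
    (x : Fin n → R) (hx : ∀ i, ∃ d : ℕ, x i ∈ 𝒜 d)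
    (hfin : Module.Finite (Algebra.adjoin k (Set.range x)) R) :
    AlgebraicIndependent k x :=
  hsop_algebraicIndependent_general k R n hdim x hfin
end
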